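/- arXiv:1803.05187 — 10 statements merged into one kernel-verified Lean document; each statement's English description precedes it below -/
import Mathlib

section
/- Let G(n) denote the number of permutations σ of [n] = {1,…,n} that are not locally disjoint from the identity permutation. Then G(n) ≤ 5^n for every positive integer n. -/
/-!
Call `x ↦ σ x` an arc, going right if `x < σ x`. If `σ` is not locally disjoint from the
identity, no two right-going arcs of `σ` cross, and neither do two right-going arcs of `σ⁻¹`
(the left-going arcs of `σ`, reversed). Non-crossing arcs nest, so the right-going arc leaving
`i` ends at the first `k > i` at which the right-going arcs starting in `[i, k)` have all been
matched by those ending in `(i, k]`. Hence `σ` is determined by recording, for each `x`, whether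
it is fixed and otherwise the directions of the arcs leaving and entering `x`: five possibilities.
-/

/-- Two permutations `σ` and `τ` of `[n]` are *locally disjoint* if there exist
distinct elements `a, b` with `σ⁻¹(a) < σ⁻¹(b) < τ⁻¹(a) < τ⁻¹(b)` or
`τ⁻¹(a) < τ⁻¹(b) < σ⁻¹(a) < σ⁻¹(b)`. -/
def LocallyDisjoint {n : ℕ} (σ τ : Equiv.Perm (Fin n)) : Prop :=
  ∃ a b : Fin n, a ≠ b ∧
    ((σ⁻¹ a < σ⁻¹ b ∧ σ⁻¹ b < τ⁻¹ a ∧ τ⁻¹ a < τ⁻¹ b) ∨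
     (τ⁻¹ a < τ⁻¹ b ∧ τ⁻¹ b < σ⁻¹ a ∧ σ⁻¹ a < σ⁻¹ b))

open Finset

namespace Equiv.Perm

variable {α : Type*} [LinearOrder α] {σ τ : Perm α}

def NoncrossingExcedances (σ : Perm α) : Prop :=
  ∀ ⦃i j : α⦄, i < j → j < σ i → ¬ σ i < σ j

theorem NoncrossingExcedances.apply_lt (hσ : σ.NoncrossingExcedances) {i j : α} (hij : i < j)
    (hj : j < σ i) : σ j < σ i :=
  (not_lt.1 (hσ hij hj)).lt_of_ne (σ.injective.ne hij.ne')

/-- `none` at a fixed point `x`, and otherwise whether the arc leaving `x` goes right and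
whether the arc entering `x` comes from the right. -/
def arcType (σ : Perm α) (x : α) : Option (Bool × Bool) :=
  if σ x = x then none else some (decide (x < σ x), decide (x < σ⁻¹ x))

theorem arcType_inv (σ : Perm α) (x : α) : σ⁻¹.arcType x = (σ.arcType x).map Prod.swap := by
  have : σ⁻¹ x = x ↔ σ x = x := by rw [inv_eq_iff_eq, eq_comm]
  simp only [arcType, inv_inv, this]
  split_ifs <;> rfl

theorem apply_eq_self_iff_of_arcType_eq (h : σ.arcType = τ.arcType) (x : α) :
    σ x = x ↔ τ x = x := by
  have := congrFun h x
  unfold arcType at this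
  split_ifs at this <;> simp_all

theorem lt_apply_iff_of_arcType_eq (h : σ.arcType = τ.arcType) (x : α) :
    x < σ x ↔ x < τ x := by
  have := congrFun h x
  unfold arcType at this
  split_ifs at this with hσx hτx <;> simp_all

theorem apply_lt_iff_of_arcType_eq (h : σ.arcType = τ.arcType) (x : α) :
    σ x < x ↔ τ x < x := by
  have := apply_eq_self_iff_of_arcType_eq h x
  have := lt_apply_iff_of_arcType_eq h x
  grind

variable [LocallyFiniteOrder α]

theorem NoncrossingExcedances.card_Ico_le (hσ : σ.NoncrossingExcedances) (i : α) :
    #{x ∈ Ico i (σ i) | x < σ x} ≤ #{y ∈ Ioc i (σ i) | σ⁻¹ y < y} := by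
  refine card_le_card_of_injOn σ (fun x hx => ?_) σ.injective.injOn
  simp only [coe_filter, mem_Ico, mem_Ioc, Set.mem_ofPred_eq, coe_inv, symm_apply_apply] at hx ⊢
  obtain ⟨⟨hix, hxi⟩, hx⟩ := hx
  refine ⟨⟨hix.trans_lt hx, ?_⟩, hx⟩
  rcases hix.eq_or_lt with rfl | hix
  · exact le_rfl
  · exact (hσ.apply_lt hix hxi).le

theorem NoncrossingExcedances.card_Ioc_le (hσ : σ.NoncrossingExcedances) {i k : α}
    (hk : k < σ i) : #{y ∈ Ioc i k | σ⁻¹ y < y} ≤ #{x ∈ Ioo i k | x < σ x} := by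
  refine card_le_card_of_injOn (⇑σ⁻¹) (fun y hy => ?_) (σ⁻¹).injective.injOn
  simp only [coe_filter, mem_Ioc, mem_Ioo, Set.mem_ofPred_eq, coe_inv, apply_symm_apply] at hy ⊢
  obtain ⟨⟨hiy, hyk⟩, hy⟩ := hy
  refine ⟨⟨?_, hy.trans_le hyk⟩, hy⟩
  by_contra! hyi
  have hy_lt : σ (σ⁻¹ y) < σ i := by simpa using hyk.trans_lt hk
  rcases hyi.eq_or_lt with hyi | hyi
  · exact hy_lt.ne (congrArg σ hyi)
  · exact hσ hyi (by simpa using hiy) hy_lt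

theorem apply_eq_of_lt_apply (hσ : σ.NoncrossingExcedances) (hτ : τ.NoncrossingExcedances)
    (hO : ∀ x, x < σ x ↔ x < τ x) (hC : ∀ y, σ⁻¹ y < y ↔ τ⁻¹ y < y) {x : α} (hx : x < σ x) :
    σ x = τ x := by
  wlog hlt : τ x < σ x generalizing σ τ
  · rcases (not_lt.1 hlt).lt_or_eq with hlt | heq
    · exact (this hτ hσ (fun x => (hO x).symm) (fun y => (hC y).symm) ((hO x).1 hx) hlt).symm
    · exact heq
  -- In `[x, τ x]`, each arc of `τ` opened in `[x, τ x)` closes in `(x, τ x]`, each arc of `σ`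
  -- closed in `(x, τ x]` opens in `(x, τ x)`, and the two have the same openers and closers.
  have hτx : x < τ x := (hO x).1 hx
  have hσ_le := hσ.card_Ioc_le hlt
  have hτ_le := hτ.card_Ico_le x
  rw [filter_congr (fun y _ => hC y), filter_congr (fun y _ => hO y)] at hσ_le
  have hstrict : #{y ∈ Ioo x (τ x) | y < τ y} < #{y ∈ Ico x (τ x) | y < τ y} := by
    rw [← Ioo_insert_left hτx, filter_insert, if_pos hτx, card_insert_of_notMem (by simp)]
    exact Nat.lt_succ_self _
  omega

theorem eq_of_arcType_eq (hσ : σ.NoncrossingExcedances) (hσ' : σ⁻¹.NoncrossingExcedances)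
    (hτ : τ.NoncrossingExcedances) (hτ' : τ⁻¹.NoncrossingExcedances)
    (h : σ.arcType = τ.arcType) : σ = τ := by
  have h' : σ⁻¹.arcType = τ⁻¹.arcType := funext fun x => by simp only [arcType_inv, h]
  ext x
  rcases lt_trichotomy x (σ x) with hx | hx | hx
  · exact apply_eq_of_lt_apply hσ hτ (lt_apply_iff_of_arcType_eq h)
      (apply_lt_iff_of_arcType_eq h') hx
  · rw [← hx, eq_comm, ← apply_eq_self_iff_of_arcType_eq h, ← hx]
  · -- a left-going arc of `σ` is a right-going arc of `σ⁻¹`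
    have hinv : σ⁻¹ (σ x) = τ⁻¹ (σ x) :=
      apply_eq_of_lt_apply hσ' hτ' (lt_apply_iff_of_arcType_eq h')
        (by simpa using apply_lt_iff_of_arcType_eq h) (by simpa using hx)
    rw [eq_comm, inv_eq_iff_eq] at hinv
    simpa using hinv

end Equiv.Perm

open Equiv.Perm

theorem noncrossingExcedances_of_not_locallyDisjoint {n : ℕ} {σ : Equiv.Perm (Fin n)}
    (h : ¬ LocallyDisjoint σ 1) : σ.NoncrossingExcedances := by
  intro i j hij hj hσ
  exact h ⟨σ i, σ j, σ.injective.ne hij.ne, Or.inl (by simpa using ⟨hij, hj, hσ⟩)⟩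

theorem noncrossingExcedances_inv_of_not_locallyDisjoint {n : ℕ} {σ : Equiv.Perm (Fin n)}
    (h : ¬ LocallyDisjoint σ 1) : σ⁻¹.NoncrossingExcedances := by
  intro i j hij hj hσ
  exact h ⟨i, j, hij.ne, Or.inr (by simpa using ⟨hij, hj, hσ⟩)⟩

theorem card_not_locallyDisjoint_id_le_general (n : ℕ) :
    Nat.card {σ : Equiv.Perm (Fin n) // ¬ LocallyDisjoint σ 1} ≤ 5 ^ n := by
  have hinj : Function.Injective
      fun σ : {σ : Equiv.Perm (Fin n) // ¬ LocallyDisjoint σ 1} => σ.1.arcType := by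
    rintro ⟨σ, hσ⟩ ⟨τ, hτ⟩ h
    exact Subtype.ext <| eq_of_arcType_eq
      (noncrossingExcedances_of_not_locallyDisjoint hσ)
      (noncrossingExcedances_inv_of_not_locallyDisjoint hσ)
      (noncrossingExcedances_of_not_locallyDisjoint hτ)
      (noncrossingExcedances_inv_of_not_locallyDisjoint hτ) h
  calc Nat.card {σ : Equiv.Perm (Fin n) // ¬ LocallyDisjoint σ 1}
      ≤ Nat.card (Fin n → Option (Bool × Bool)) := Nat.card_le_card_of_injective _ hinj
    _ = 5 ^ n := by simp

/-- The number of permutations of `[n]` not locally disjoint from the identity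
permutation is at most `5 ^ n`. -/
theorem card_not_locallyDisjoint_id_le (n : ℕ) (hn : 0 < n) :
    Nat.card {σ : Equiv.Perm (Fin n) // ¬ LocallyDisjoint σ 1} ≤ 5 ^ n :=
  card_not_locallyDisjoint_id_le_general n
end

section
/- For every positive integer n and every fixed permutation π of [n] = {1,…,n}, the number of permutations σ of [n] that are not locally disjoint from π is at most 5^n. -/
/-!
Put `ρ = σ⁻¹ * π`. A pair of positions `c < d` with `ρ c < ρ d < c` yields the first pattern of
local disjointness (with `a = π c`, `b = π d`), and the same pair for `ρ⁻¹ = π⁻¹ * σ` the second.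
So it suffices to count permutations `ρ` such that neither `ρ` nor `ρ⁻¹` has such a "low pair".

Such a `ρ` is determined by its displacement: for each `i`, how `ρ i` and `ρ⁻¹ i` compare with
`i`. Only 5 of the 9 pairs of comparisons occur, as `ρ i = i ↔ ρ⁻¹ i = i`. The values `ρ i < i`
are recovered by induction on `i`: if `ρ i < ρ' i = l < i`, then `j = ρ⁻¹ l` lies above `l` because
`ρ'⁻¹ l = i` does; `j < i` contradicts the induction hypothesis and `j > i` makes `(i, j)` a low pair
of `ρ`. The values `ρ i > i` are the positions `ρ⁻¹ x < x` of `ρ⁻¹`, handled in the same way.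
-/

namespace Equiv.Perm

variable {α : Type*} [LinearOrder α]

def HasLowPair (ρ : Perm α) : Prop :=
  ∃ c d, c < d ∧ ρ c < ρ d ∧ ρ d < c

def displacement (ρ : Perm α) (i : α) : Ordering × Ordering :=
  (compare (ρ i) i, compare (ρ⁻¹ i) i)

theorem displacement_inv (ρ : Perm α) (i : α) :
    ρ⁻¹.displacement i = (ρ.displacement i).swap := by
  simp [displacement]

theorem displacement_fst_eq_eq_iff (ρ : Perm α) (i : α) :
    (ρ.displacement i).1 = .eq ↔ (ρ.displacement i).2 = .eq := by
  rw [displacement, compare_eq_iff_eq, compare_eq_iff_eq, inv_eq_iff_eq, eq_comm]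

variable {ρ ρ' : Perm α}

theorem compare_apply_eq_of_displacement_eq (h : ρ.displacement = ρ'.displacement) (i : α) :
    compare (ρ i) i = compare (ρ' i) i :=
  congrArg Prod.fst (congrFun h i)

theorem compare_inv_apply_eq_of_displacement_eq (h : ρ.displacement = ρ'.displacement)
    (i : α) : compare (ρ⁻¹ i) i = compare (ρ'⁻¹ i) i :=
  congrArg Prod.snd (congrFun h i)

theorem apply_lt_self_iff_of_displacement_eq (h : ρ.displacement = ρ'.displacement) (i : α) :
    ρ i < i ↔ ρ' i < i := by
  rw [← compare_lt_iff_lt, compare_apply_eq_of_displacement_eq h, compare_lt_iff_lt]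

theorem not_apply_lt_apply_of_displacement_eq (hρ : ¬ρ.HasLowPair)
    (h : ρ.displacement = ρ'.displacement) {i : α} (hi : ρ' i < i)
    (ih : ∀ j < i, ρ j < j → ρ j = ρ' j) : ¬ρ i < ρ' i := by
  intro hlt
  set l := ρ' i
  have hl : l < ρ⁻¹ l := by
    rw [← compare_gt_iff_gt, compare_inv_apply_eq_of_displacement_eq h, compare_gt_iff_gt]
    rwa [show ρ'⁻¹ l = i from ρ'.symm_apply_apply i]
  set j := ρ⁻¹ l
  have hj : ρ j = l := ρ.apply_symm_apply l
  rcases lt_trichotomy j i with hji | hji | hij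
  · exact hji.ne (ρ'.injective ((ih j hji (hj ▸ hl)).symm.trans hj))
  · exact hlt.ne (hji ▸ hj)
  · exact hρ ⟨i, j, hij, hj ▸ hlt, hj ▸ hi⟩

variable [WellFoundedLT α]

theorem apply_eq_of_displacement_eq (hρ : ¬ρ.HasLowPair) (hρ' : ¬ρ'.HasLowPair)
    (h : ρ.displacement = ρ'.displacement) (i : α) (hi : ρ i < i) : ρ i = ρ' i := by
  induction i using WellFoundedLT.induction with
  | _ i ih =>
    have hi' := (apply_lt_self_iff_of_displacement_eq h i).1 hi
    refine le_antisymm (not_lt.1 ?_) (not_lt.1 ?_)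
    · refine not_apply_lt_apply_of_displacement_eq hρ' h.symm hi fun j hj hj' => ?_
      exact (ih j hj ((apply_lt_self_iff_of_displacement_eq h j).2 hj')).symm
    · exact not_apply_lt_apply_of_displacement_eq hρ h hi' ih

theorem eq_of_displacement_eq (hρ : ¬ρ.HasLowPair) (hρinv : ¬ρ⁻¹.HasLowPair)
    (hρ' : ¬ρ'.HasLowPair) (hρ'inv : ¬ρ'⁻¹.HasLowPair)
    (h : ρ.displacement = ρ'.displacement) : ρ = ρ' := by
  have hinv : ρ⁻¹.displacement = ρ'⁻¹.displacement := by
    funext i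
    rw [displacement_inv, displacement_inv, h]
  ext i
  rcases lt_trichotomy (ρ i) i with hlt | hfix | hgt
  · exact apply_eq_of_displacement_eq hρ hρ' h i hlt
  · have := (compare_apply_eq_of_displacement_eq h i).symm.trans (compare_eq_iff_eq.2 hfix)
    rw [hfix, compare_eq_iff_eq.1 this]
  · have := apply_eq_of_displacement_eq hρinv hρ'inv hinv (ρ i) (by simpa using hgt)
    rwa [show ρ⁻¹ (ρ i) = i from ρ.symm_apply_apply i, eq_comm, inv_eq_iff_eq] at this

theorem card_not_hasLowPair_le [Fintype α] :
    Nat.card {ρ : Perm α // ¬ρ.HasLowPair ∧ ¬ρ⁻¹.HasLowPair} ≤ 5 ^ Nat.card α := by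
  let code (ρ : {ρ : Perm α // ¬ρ.HasLowPair ∧ ¬ρ⁻¹.HasLowPair}) (i : α) :
      {p : Ordering × Ordering // p.1 = .eq ↔ p.2 = .eq} :=
    ⟨ρ.1.displacement i, displacement_fst_eq_eq_iff ρ.1 i⟩
  have hcode : Function.Injective code := by
    rintro ⟨ρ, hρ, hρinv⟩ ⟨ρ', hρ', hρ'inv⟩ h
    exact Subtype.ext <| eq_of_displacement_eq hρ hρinv hρ' hρ'inv <|
      funext fun i => congrArg Subtype.val (congrFun h i)
  calc _ ≤ Nat.card (α → {p : Ordering × Ordering // p.1 = .eq ↔ p.2 = .eq}) :=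
        Nat.card_le_card_of_injective code hcode
    _ = 5 ^ Nat.card α := by
        rw [Nat.card_fun, Nat.card_eq_fintype_card (α := Subtype _)]
        rfl

end Equiv.Perm

open Equiv Perm

theorem LocallyDisjoint.symm {n : ℕ} {σ τ : Perm (Fin n)} (h : LocallyDisjoint σ τ) :
    LocallyDisjoint τ σ := by
  obtain ⟨a, b, hab, h | h⟩ := h
  exacts [⟨a, b, hab, Or.inr h⟩, ⟨a, b, hab, Or.inl h⟩]

theorem LocallyDisjoint.of_hasLowPair {n : ℕ} {σ π : Perm (Fin n)}
    (h : (σ⁻¹ * π).HasLowPair) : LocallyDisjoint σ π := by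
  obtain ⟨c, d, hcd, h₁, h₂⟩ := h
  refine ⟨π c, π d, π.injective.ne hcd.ne, Or.inl ⟨?_, ?_, ?_⟩⟩ <;> simpa using ‹_›

theorem LocallyDisjoint.of_hasLowPair_inv {n : ℕ} {σ π : Perm (Fin n)}
    (h : (σ⁻¹ * π)⁻¹.HasLowPair) : LocallyDisjoint σ π := by
  rw [mul_inv_rev, inv_inv] at h
  exact (of_hasLowPair h).symm

theorem card_not_locallyDisjoint_le_general (n : ℕ) (π : Equiv.Perm (Fin n)) :
    Nat.card {σ : Equiv.Perm (Fin n) // ¬ LocallyDisjoint σ π} ≤ 5 ^ n := by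
  let toLowPairFree (σ : {σ : Perm (Fin n) // ¬LocallyDisjoint σ π}) :
      {ρ : Perm (Fin n) // ¬ρ.HasLowPair ∧ ¬ρ⁻¹.HasLowPair} :=
    ⟨σ.1⁻¹ * π, fun h => σ.2 (.of_hasLowPair h), fun h => σ.2 (.of_hasLowPair_inv h)⟩
  have hinj : Function.Injective toLowPairFree := fun σ τ h =>
    Subtype.ext (inv_injective (mul_right_cancel (congrArg Subtype.val h)))
  calc _ ≤ Nat.card {ρ : Perm (Fin n) // ¬ρ.HasLowPair ∧ ¬ρ⁻¹.HasLowPair} :=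
        Nat.card_le_card_of_injective toLowPairFree hinj
    _ ≤ 5 ^ n := by simpa using card_not_hasLowPair_le (α := Fin n)

/-- For any fixed permutation `π` of `[n]`, the number of permutations of `[n]`
not locally disjoint from `π` is at most `5 ^ n`. -/
theorem card_not_locallyDisjoint_le (n : ℕ) (hn : 0 < n) (π : Equiv.Perm (Fin n)) :
    Nat.card {σ : Equiv.Perm (Fin n) // ¬ LocallyDisjoint σ π} ≤ 5 ^ n :=
  card_not_locallyDisjoint_le_general n π
end

section
/- For every positive integer n, every set S of permutations of [n] = {1,…,n} such that any two distinct permutations in S are locally disjoint satisfies 6^{⌊n/3⌋} · |S| ≤ n!. -/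
open Equiv Nat

theorem Subgroup.card_mul_card_le_of_pairwise_inv_mul_notMem {G : Type*} [Group G] [Finite G]
    (H : Subgroup G) (S : Finset G) (hS : ∀ σ ∈ S, ∀ τ ∈ S, σ ≠ τ → σ⁻¹ * τ ∉ H) :
    S.card * Nat.card H ≤ Nat.card G := by
  have hinj : Function.Injective (fun σ : S => (σ : G ⧸ H)) := by
    rintro ⟨σ, hσ⟩ ⟨τ, hτ⟩ heq
    by_contra hne
    exact hS σ hσ τ hτ (fun h => hne (Subtype.ext h)) (QuotientGroup.eq.mp heq)
  calc S.card * Nat.card H ≤ H.index * Nat.card H := by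
        gcongr
        rw [← Nat.card_eq_finsetCard, H.index_eq_card]
        exact Nat.card_le_card_of_injective _ hinj
    _ = Nat.card G := by rw [mul_comm, H.card_mul_index]

-- `⟨i, j⟩ ↦ k * i + j`, position `j` of the `i`-th block of `k` consecutive positions.
def blockEmbedding (k n : ℕ) : (Σ _ : Fin (n / k), Fin k) ↪ Fin n :=
  (sigmaEquivProd _ _).toEmbedding.trans
    (finProdFinEquiv.toEmbedding.trans (Fin.castLEEmb (Nat.div_mul_le_self n k)))

theorem blockEmbedding_val_div {k n : ℕ} (x : Σ _ : Fin (n / k), Fin k) :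
    (blockEmbedding k n x).val / k = x.1 := by
  obtain ⟨i, j⟩ := x
  have hk : 0 < k := j.pos
  simp [blockEmbedding, finProdFinEquiv_apply_val, Nat.add_mul_div_left _ _ hk,
    Nat.div_eq_of_lt j.isLt]

noncomputable def blockPerm (k n : ℕ) : (Fin (n / k) → Perm (Fin k)) →* Perm (Fin n) :=
  (Perm.viaEmbeddingHom (blockEmbedding k n)).comp (Perm.sigmaCongrRightHom _)

theorem blockPerm_injective (k n : ℕ) : Function.Injective (blockPerm k n) :=
  (Perm.viaEmbeddingHom_injective _).comp Perm.sigmaCongrRightHom_injective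

theorem blockPerm_apply_val_div {k n : ℕ} (g : Fin (n / k) → Perm (Fin k)) (p : Fin n) :
    (blockPerm k n g p).val / k = p.val / k := by
  by_cases hp : p ∈ Set.range (blockEmbedding k n)
  · obtain ⟨⟨i, j⟩, rfl⟩ := hp
    simp only [blockPerm, MonoidHom.comp_apply, Perm.viaEmbeddingHom_apply,
      Perm.sigmaCongrRightHom_apply, Perm.viaEmbedding_apply, blockEmbedding_val_div]
    rfl
  · simp only [blockPerm, MonoidHom.comp_apply, Perm.viaEmbeddingHom_apply,
      Perm.viaEmbedding_apply_of_notMem _ _ _ hp]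

theorem card_range_blockPerm (k n : ℕ) : Nat.card (blockPerm k n).range = k ! ^ (n / k) := by
  rw [← Nat.card_congr (MonoidHom.ofInjective (blockPerm_injective k n)).toEquiv, Nat.card_pi]
  simp [Fintype.card_perm]

theorem LocallyDisjoint.exists_val_div_three_ne {n : ℕ} {σ τ : Perm (Fin n)}
    (h : LocallyDisjoint σ τ) : ∃ a, (σ⁻¹ a).val / 3 ≠ (τ⁻¹ a).val / 3 := by
  by_contra! hblock
  obtain ⟨a, b, -, ⟨h₁, h₂, h₃⟩ | ⟨h₁, h₂, h₃⟩⟩ := h <;>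
  · have := hblock a
    have := hblock b
    rw [Fin.lt_def] at h₁ h₂ h₃
    omega

theorem LocallyDisjoint.inv_mul_notMem_range_blockPerm {n : ℕ} {σ τ : Perm (Fin n)}
    (h : LocallyDisjoint σ τ) : σ⁻¹ * τ ∉ (blockPerm 3 n).range := by
  rintro ⟨g, hg⟩
  obtain ⟨a, ha⟩ := h.exists_val_div_three_ne
  exact ha (by simpa [hg] using blockPerm_apply_val_div g (τ⁻¹ a))

theorem card_pairwise_locallyDisjoint_le_general (n : ℕ)
    (S : Finset (Equiv.Perm (Fin n)))
    (hS : ∀ σ ∈ S, ∀ τ ∈ S, σ ≠ τ → LocallyDisjoint σ τ) :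
    6 ^ (n / 3) * S.card ≤ Nat.factorial n := by
  have h := (blockPerm 3 n).range.card_mul_card_le_of_pairwise_inv_mul_notMem S
    fun σ hσ τ hτ hne => (hS σ hσ τ hτ hne).inv_mul_notMem_range_blockPerm
  rwa [card_range_blockPerm, mul_comm, Nat.card_perm, Nat.card_fin] at h

/-- Any set of pairwise locally disjoint permutations of `[n]` has size at most
`n! / 6 ^ ⌊n/3⌋`. -/
theorem card_pairwise_locallyDisjoint_le (n : ℕ) (hn : 0 < n)
    (S : Finset (Equiv.Perm (Fin n)))
    (hS : ∀ σ ∈ S, ∀ τ ∈ S, σ ≠ τ → LocallyDisjoint σ τ) :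
    6 ^ (n / 3) * S.card ≤ Nat.factorial n :=
  card_pairwise_locallyDisjoint_le_general n S hS
end

section
/- For every real number α with 0 < α < 1 there exists a positive integer N such that for all n ≥ N there is a set S of permutations of [n] = {1,…,n} with any two distinct permutations in S locally encapsulating, and |S| > (⌊αn⌋)!. -/
/-- Two permutations `σ` and `τ` of `[n]` are *locally encapsulating* if there exist
elements `a, b` with `σ⁻¹(a) < σ⁻¹(b)` and `τ⁻¹(a) < τ⁻¹(b)` such that one of the
position intervals `[σ⁻¹(a), σ⁻¹(b)]`, `[τ⁻¹(a), τ⁻¹(b)]` strictly contains the other. -/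
def LocallyEncapsulating {n : ℕ} (σ τ : Equiv.Perm (Fin n)) : Prop :=
  ∃ a b : Fin n, σ⁻¹ a < σ⁻¹ b ∧ τ⁻¹ a < τ⁻¹ b ∧
    (Set.Icc (σ⁻¹ a) (σ⁻¹ b) ⊂ Set.Icc (τ⁻¹ a) (τ⁻¹ b) ∨
     Set.Icc (τ⁻¹ a) (τ⁻¹ b) ⊂ Set.Icc (σ⁻¹ a) (σ⁻¹ b))

/-- For every `0 < α < 1` and all sufficiently large `n` there is a set of pairwise
locally encapsulating permutations of `[n]` of size greater than `(⌊αn⌋)!`. -/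
theorem exists_pairwise_locallyEncapsulating (α : ℝ) (h0 : 0 < α) (h1 : α < 1) :
    ∃ N : ℕ, 0 < N ∧ ∀ n : ℕ, N ≤ n →
      ∃ S : Finset (Equiv.Perm (Fin n)),
        (∀ σ ∈ S, ∀ τ ∈ S, σ ≠ τ → LocallyEncapsulating σ τ) ∧
        Nat.factorial ⌊α * n⌋₊ < S.card := by
  have hα : (0:ℝ) < 1 - α := by linarith
  refine ⟨⌈2/(1-α)⌉₊ + 3, by positivity, ?_⟩
  intro n hn
  obtain ⟨m, rfl⟩ : ∃ m, n = m + 1 := ⟨n - 1, by omega⟩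
  have hm2 : 2 ≤ m := by omega
  -- real-number bound : α * n < m
  have hceil : (⌈2/(1-α)⌉₊ : ℝ) ≤ (m + 1 : ℕ) := by
    exact_mod_cast Nat.cast_le.mpr (le_trans (Nat.le_add_right _ 3) hn)
  have hdiv : (2/(1-α) : ℝ) ≤ ((m:ℝ) + 1) := by
    have := le_trans (Nat.le_ceil (2/(1-α))) hceil
    push_cast at this
    linarith
  have h2 : (2:ℝ) ≤ (1 - α) * ((m:ℝ) + 1) := by
    rw [div_le_iff₀ hα] at hdiv
    linarith
  have hfloor : ⌊α * ((m + 1 : ℕ) : ℝ)⌋₊ < m := by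
    rw [Nat.floor_lt (by positivity)]
    push_cast
    nlinarith
  -- the set S : all permutations fixing 0
  have hinj : Function.Injective
      (fun π : Equiv.Perm (Fin m) => Equiv.Perm.decomposeFin.symm (0, π)) := by
    intro π π' h
    have := Equiv.Perm.decomposeFin.symm.injective h
    simpa using this
  refine ⟨Finset.image (fun π : Equiv.Perm (Fin m) =>
      Equiv.Perm.decomposeFin.symm (0, π)) Finset.univ, ?_, ?_⟩
  · intro σ hσ τ hτ hne
    simp only [Finset.mem_image, Finset.mem_univ, true_and] at hσ hτ
    obtain ⟨π, rfl⟩ := hσ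
    obtain ⟨ρ, rfl⟩ := hτ
    set σ := Equiv.Perm.decomposeFin.symm (0, π) with hσdef
    set τ := Equiv.Perm.decomposeFin.symm (0, ρ) with hτdef
    have hσ0 : σ 0 = 0 := Equiv.Perm.decomposeFin_symm_apply_zero 0 π
    have hτ0 : τ 0 = 0 := Equiv.Perm.decomposeFin_symm_apply_zero 0 ρ
    have hσi0 : σ⁻¹ 0 = 0 := by
      rw [Equiv.Perm.inv_eq_iff_eq, hσ0]
    have hτi0 : τ⁻¹ 0 = 0 := by
      rw [Equiv.Perm.inv_eq_iff_eq, hτ0]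
    have hb : ∃ b : Fin (m+1), σ⁻¹ b ≠ τ⁻¹ b := by
      by_contra hall
      push_neg at hall
      exact hne (inv_injective (Equiv.Perm.ext hall))
    obtain ⟨b, hbne⟩ := hb
    have hb0 : b ≠ 0 := by
      rintro rfl
      exact hbne (hσi0.trans hτi0.symm)
    have hσb : σ⁻¹ 0 < σ⁻¹ b := by
      rw [hσi0]
      refine Fin.pos_iff_ne_zero.mpr ?_
      intro h
      exact hb0 (by rw [← hσi0] at h; exact σ⁻¹.injective h)
    have hτb : τ⁻¹ 0 < τ⁻¹ b := by
      rw [hτi0]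
      refine Fin.pos_iff_ne_zero.mpr ?_
      intro h
      exact hb0 (by rw [← hτi0] at h; exact τ⁻¹.injective h)
    refine ⟨0, b, hσb, hτb, ?_⟩
    rcases lt_or_gt_of_ne hbne with hlt | hlt
    · left
      constructor
      · exact Set.Icc_subset_Icc le_rfl hlt.le
      · intro hsub
        have := hsub ⟨Fin.zero_le _, le_rfl⟩
        exact absurd this.2 (not_le.mpr hlt)
    · right
      constructor
      · exact Set.Icc_subset_Icc le_rfl hlt.le
      · intro hsub
        have := hsub ⟨Fin.zero_le _, le_rfl⟩
        exact absurd this.2 (not_le.mpr hlt)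
  · rw [Finset.card_image_of_injective _ hinj, Finset.card_univ, Fintype.card_perm,
      Fintype.card_fin]
    rcases Nat.eq_zero_or_pos ⌊α * (((m + 1 : ℕ)) : ℝ)⌋₊ with h0f | h0f
    · rw [h0f]
      exact Nat.one_lt_factorial.mpr (by omega)
    · exact (Nat.factorial_lt h0f).mpr hfloor
end

section
/- Let k ≥ 2 be an integer, let n be a positive multiple of k, put m = n/k, and partition [n] = {1,…,n} into the k consecutive blocks B_i = {(i−1)m+1, …, im} for i = 1,…,k. Let Q be the set of permutations σ of [n] with σ(B_i) = B_i for every i. Then there exists a subset C ⊆ Q such that k · |C| ≥ (m!)^{k−1} and any two distinct permutations σ, τ ∈ C differ on at least two blocks, i.e., there exist indices i ≠ j such that the restrictions of σ and τ to B_i differ and the restrictions of σ and τ to B_j differ. -/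
/-!
Block-preserving permutations of `[k * m]` are exactly the block-diagonal ones, so they correspond
to tuples `(g₁, …, g_k)` of permutations of `[m]`. Sorting the `(m!)^k` tuples by their ordered
product `g₁ ⋯ g_k` gives, by pigeonhole, a fibre of size at least `(m!)^(k-1)`. Two distinct tuples
in one fibre cannot differ in a single coordinate, since the product determines any one factor from
the others; so the corresponding permutations differ on at least two blocks.
-/

open Equiv Finset

theorem List.apply_eq_of_prod_map_eq {ι M : Type*} [CancelMonoid M] {g h : ι → M} {i : ι}
    (hgh : ∀ j ≠ i, g j = h j) :
    ∀ {l : List ι}, l.Nodup → i ∈ l → (l.map g).prod = (l.map h).prod → g i = h i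
  | a :: l, hl, hi, hp => by
    rw [List.nodup_cons] at hl
    rw [List.map_cons, List.map_cons, List.prod_cons, List.prod_cons] at hp
    by_cases hai : a = i
    · subst hai
      have hrest : l.map g = l.map h :=
        List.map_congr_left fun j hj => hgh j (ne_of_mem_of_not_mem hj hl.1)
      rw [hrest] at hp
      exact mul_right_cancel hp
    · rw [hgh a hai] at hp
      exact List.apply_eq_of_prod_map_eq hgh hl.2
        ((List.mem_cons.1 hi).resolve_left (Ne.symm hai)) (mul_left_cancel hp)

theorem exists_ne_ne_of_prod_ofFn_eq {M : Type*} [CancelMonoid M] {k : ℕ} {g h : Fin k → M}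
    (hp : (List.ofFn g).prod = (List.ofFn h).prod) (hne : g ≠ h) :
    ∃ i j, i ≠ j ∧ g i ≠ h i ∧ g j ≠ h j := by
  obtain ⟨i, hi⟩ := Function.ne_iff.1 hne
  have : ∃ j ≠ i, g j ≠ h j := by
    by_contra! hc
    rw [List.ofFn_eq_map, List.ofFn_eq_map] at hp
    exact hi (List.apply_eq_of_prod_map_eq hc (List.nodup_finRange k) (List.mem_finRange i) hp)
  obtain ⟨j, hji, hj⟩ := this
  exact ⟨i, j, hji.symm, hi, hj⟩

theorem exists_pow_le_card_fiber_prod_ofFn {M : Type*} [Monoid M] [Fintype M] [DecidableEq M]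
    {k : ℕ} (hk : 1 ≤ k) :
    ∃ s : M, Fintype.card M ^ (k - 1) ≤ #{g : Fin k → M | (List.ofFn g).prod = s} :=
  Fintype.exists_le_card_fiber_of_mul_le_card _ <| by
    rw [Fintype.card_fun, Fintype.card_fin, ← pow_succ', Nat.sub_add_cancel hk]

section BlockDiagonal

variable {k m : ℕ}

theorem Fin.divNat_finProdFinEquiv (x : Fin k × Fin m) : (finProdFinEquiv x).divNat = x.1 :=
  congrArg Prod.fst (finProdFinEquiv.symm_apply_apply x)

/-- The permutation of `Fin (k * m)` acting as `g i` on the `i`-th block of `m` consecutive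
positions. -/
def blockDiagPerm (g : Fin k → Perm (Fin m)) : Perm (Fin (k * m)) :=
  finProdFinEquiv.permCongr (prodCongrRight g)

theorem blockDiagPerm_finProdFinEquiv (g : Fin k → Perm (Fin m)) (i : Fin k) (r : Fin m) :
    blockDiagPerm g (finProdFinEquiv (i, r)) = finProdFinEquiv (i, g i r) := by
  simp [blockDiagPerm, permCongr_apply]

theorem divNat_blockDiagPerm (g : Fin k → Perm (Fin m)) (x : Fin (k * m)) :
    (blockDiagPerm g x).divNat = x.divNat := by
  obtain ⟨⟨i, r⟩, rfl⟩ := finProdFinEquiv.surjective x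
  rw [blockDiagPerm_finProdFinEquiv, Fin.divNat_finProdFinEquiv, Fin.divNat_finProdFinEquiv]

theorem exists_divNat_eq_blockDiagPerm_ne {g h : Fin k → Perm (Fin m)} {i : Fin k}
    (hi : g i ≠ h i) : ∃ x : Fin (k * m), x.divNat = i ∧ blockDiagPerm g x ≠ blockDiagPerm h x := by
  obtain ⟨r, hr⟩ := DFunLike.ne_iff.1 hi
  refine ⟨finProdFinEquiv (i, r), Fin.divNat_finProdFinEquiv _, ?_⟩
  rw [blockDiagPerm_finProdFinEquiv, blockDiagPerm_finProdFinEquiv]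
  simpa using hr

theorem blockDiagPerm_injective : Function.Injective (blockDiagPerm (k := k) (m := m)) := by
  intro g h hgh
  by_contra hne
  obtain ⟨i, hi⟩ := Function.ne_iff.1 hne
  obtain ⟨x, -, hx⟩ := exists_divNat_eq_blockDiagPerm_ne hi
  exact hx (congrFun (congrArg DFunLike.coe hgh) x)

end BlockDiagonal

theorem exists_family_differing_on_two_blocks_general (k n m : ℕ) (hk : 2 ≤ k)
    (hnm : n = k * m) :
    ∃ C : Finset (Equiv.Perm (Fin n)),
      (∀ σ ∈ C, ∀ x : Fin n, ((σ x : ℕ) / m = (x : ℕ) / m)) ∧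
      (Nat.factorial m) ^ (k - 1) ≤ k * C.card ∧
      (∀ σ ∈ C, ∀ τ ∈ C, σ ≠ τ →
        ∃ i j : ℕ, i ≠ j ∧
          (∃ x : Fin n, (x : ℕ) / m = i ∧ σ x ≠ τ x) ∧
          (∃ x : Fin n, (x : ℕ) / m = j ∧ σ x ≠ τ x)) := by
  subst hnm
  obtain ⟨s, hs⟩ := exists_pow_le_card_fiber_prod_ofFn (M := Perm (Fin m)) (k := k) (by omega)
  rw [Fintype.card_perm, Fintype.card_fin] at hs
  refine ⟨(univ.filter fun g => (List.ofFn g).prod = s).image blockDiagPerm, ?_, ?_, ?_⟩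
  · rintro _ hσ x
    obtain ⟨g, -, rfl⟩ := mem_image.1 hσ
    exact congrArg Fin.val (divNat_blockDiagPerm g x)
  · rw [card_image_of_injective _ blockDiagPerm_injective]
    exact hs.trans (Nat.le_mul_of_pos_left _ (by omega))
  · simp only [mem_image, mem_filter, mem_univ, true_and]
    rintro _ ⟨g, hg, rfl⟩ _ ⟨h, hh, rfl⟩ hne
    obtain ⟨i, j, hij, hi, hj⟩ :=
      exists_ne_ne_of_prod_ofFn_eq (hg.trans hh.symm) (ne_of_apply_ne _ hne)
    obtain ⟨x, hx, hxne⟩ := exists_divNat_eq_blockDiagPerm_ne hi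
    obtain ⟨y, hy, hyne⟩ := exists_divNat_eq_blockDiagPerm_ne hj
    exact ⟨i, j, Fin.val_ne_of_ne hij, ⟨x, congrArg Fin.val hx, hxne⟩,
      ⟨y, congrArg Fin.val hy, hyne⟩⟩

/-- Partition `[n]`, `n = k * m`, into `k` consecutive blocks of length `m`;
with `0`-indexed positions `Fin n`, the block of `x` is `(x : ℕ) / m`.
There is a family `C` of block-preserving permutations with `k * |C| ≥ (m!)^(k-1)`
such that any two distinct members differ on at least two blocks. -/
theorem exists_family_differing_on_two_blocks (k n m : ℕ) (hk : 2 ≤ k) (hn : 0 < n)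
    (hnm : n = k * m) :
    ∃ C : Finset (Equiv.Perm (Fin n)),
      (∀ σ ∈ C, ∀ x : Fin n, ((σ x : ℕ) / m = (x : ℕ) / m)) ∧
      (Nat.factorial m) ^ (k - 1) ≤ k * C.card ∧
      (∀ σ ∈ C, ∀ τ ∈ C, σ ≠ τ →
        ∃ i j : ℕ, i ≠ j ∧
          (∃ x : Fin n, (x : ℕ) / m = i ∧ σ x ≠ τ x) ∧
          (∃ x : Fin n, (x : ℕ) / m = j ∧ σ x ≠ τ x)) :=
  exists_family_differing_on_two_blocks_general k n m hk hnm
end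

section
/- Let k ≥ 2 be an integer, let n be a positive multiple of k, put m = n/k, and partition [n] = {1,…,n} into the k consecutive blocks B_i = {(i−1)m+1, …, im} for i = 1,…,k. Let σ and τ be permutations of [n] with σ(B_i) = B_i and τ(B_i) = B_i for every i, and suppose there exist indices i ≠ j such that the restrictions of σ and τ to B_i differ and the restrictions of σ and τ to B_j differ. Then σ and τ are locally encapsulating. -/
/-!
Work with the positions `σ⁻¹` and `τ⁻¹`. The permutation `σ⁻¹ * τ` preserves blocks and moves
some point of each of the two blocks, and a permutation moving a point of a finite block moves
some point of that block up and some point down (look at the least and the greatest moved point).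
Moving up in the lower block and down in the upper block gives elements `a` (lower block) and
`b` (upper block) with `τ⁻¹ a < σ⁻¹ a` and `σ⁻¹ b < τ⁻¹ b`; as the blocks are consecutive,
`[σ⁻¹ a, σ⁻¹ b]` lies strictly inside `[τ⁻¹ a, τ⁻¹ b]`.
-/

namespace Equiv.Perm

variable {α β : Type*} [LinearOrder α] [Finite α] {f : α → β} {π : Perm α}

theorem exists_apply_lt_of_apply_ne (hf : ∀ z, f (π z) = f z) {x : α} (hx : π x ≠ x) :
    ∃ y, f y = f x ∧ π y < y := by
  obtain ⟨y, ⟨hyx, hy⟩, hmax⟩ := Set.exists_max_image {z | f z = f x ∧ π z ≠ z} id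
    (Set.toFinite _) ⟨x, rfl, hx⟩
  have hπy_moved : f (π y) = f x ∧ π (π y) ≠ π y :=
    ⟨(hf y).trans hyx, fun h => hy (π.injective h)⟩
  exact ⟨y, hyx, lt_of_le_of_ne (hmax (π y) hπy_moved) hy⟩

theorem exists_lt_apply_of_apply_ne (hf : ∀ z, f (π z) = f z) {x : α} (hx : π x ≠ x) :
    ∃ y, f y = f x ∧ y < π y := by
  have hf' : ∀ z, f (π⁻¹ z) = f z := fun z => by simpa using (hf (π⁻¹ z)).symm
  have hx' : π⁻¹ x ≠ x := fun h => hx (Perm.inv_eq_iff_eq.mp h).symm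
  obtain ⟨y, hyx, hy⟩ := exists_apply_lt_of_apply_ne hf' hx'
  exact ⟨π⁻¹ y, (hf' y).trans hyx, by simpa using hy⟩

end Equiv.Perm

open Equiv

theorem locallyEncapsulating_of_nested {n : ℕ} {σ τ : Perm (Fin n)} {a b : Fin n}
    (hab : σ⁻¹ a < σ⁻¹ b) (ha : τ⁻¹ a < σ⁻¹ a) (hb : σ⁻¹ b ≤ τ⁻¹ b) :
    LocallyEncapsulating σ τ := by
  have hτ : τ⁻¹ a < τ⁻¹ b := ha.trans (hab.trans_le hb)
  exact ⟨a, b, hab, hτ, Or.inl (Set.Icc_ssubset_Icc_left hτ.le ha hb)⟩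

theorem locallyEncapsulating_of_apply_ne_of_lt {n : ℕ} {β : Type*} [Preorder β]
    {f : Fin n → β} (hf : Monotone f) {σ τ : Perm (Fin n)} (hσ : ∀ z, f (σ z) = f z)
    (hτ : ∀ z, f (τ z) = f z) {x y : Fin n} (hxy : f x < f y) (hx : σ x ≠ τ x)
    (hy : σ y ≠ τ y) : LocallyEncapsulating σ τ := by
  set π := σ⁻¹ * τ
  have hπ : ∀ z, f (π z) = f z := fun z => by
    rw [Perm.mul_apply, ← hτ z, ← hσ (σ⁻¹ (τ z)), Perm.coe_inv, apply_symm_apply]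
  have hmoved : ∀ z, σ z ≠ τ z → π z ≠ z := fun z hz h => hz (Perm.inv_eq_iff_eq.mp h).symm
  obtain ⟨c, hcx, hc⟩ := Perm.exists_lt_apply_of_apply_ne hπ (hmoved x hx)
  obtain ⟨d, hdy, hd⟩ := Perm.exists_apply_lt_of_apply_ne hπ (hmoved y hy)
  refine locallyEncapsulating_of_nested (a := τ c) (b := τ d) ?_ ?_ ?_
  · show π c < π d
    exact hf.reflect_lt (by rwa [hπ, hπ, hcx, hdy])
  · exact (τ.symm_apply_apply c).trans_lt hc
  · exact hd.le.trans_eq (τ.symm_apply_apply d).symm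

theorem locallyEncapsulating_of_differ_on_two_blocks_general (n m : ℕ) (σ τ : Equiv.Perm (Fin n))
    (hσ : ∀ x : Fin n, (σ x : ℕ) / m = (x : ℕ) / m)
    (hτ : ∀ x : Fin n, (τ x : ℕ) / m = (x : ℕ) / m)
    (hdiff : ∃ i j : ℕ, i ≠ j ∧
      (∃ x : Fin n, (x : ℕ) / m = i ∧ σ x ≠ τ x) ∧
      (∃ x : Fin n, (x : ℕ) / m = j ∧ σ x ≠ τ x)) :
    LocallyEncapsulating σ τ := by
  obtain ⟨_, _, hij, ⟨x, rfl, hx⟩, ⟨y, rfl, hy⟩⟩ := hdiff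
  have hblock : Monotone fun z : Fin n => (z : ℕ) / m := fun _ _ h => Nat.div_le_div_right h
  rcases hij.lt_or_gt with hxy | hyx
  · exact locallyEncapsulating_of_apply_ne_of_lt hblock hσ hτ hxy hx hy
  · exact locallyEncapsulating_of_apply_ne_of_lt hblock hσ hτ hyx hy hx

/-- Partition `[n]`, `n = k * m`, into `k` consecutive blocks of length `m`
(with `0`-indexed positions, the block of `x` is `(x : ℕ) / m`). If two
block-preserving permutations differ on at least two blocks, then they are
locally encapsulating. -/
theorem locallyEncapsulating_of_differ_on_two_blocks (k n m : ℕ) (hk : 2 ≤ k)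
    (hn : 0 < n) (hnm : n = k * m) (σ τ : Equiv.Perm (Fin n))
    (hσ : ∀ x : Fin n, (σ x : ℕ) / m = (x : ℕ) / m)
    (hτ : ∀ x : Fin n, (τ x : ℕ) / m = (x : ℕ) / m)
    (hdiff : ∃ i j : ℕ, i ≠ j ∧
      (∃ x : Fin n, (x : ℕ) / m = i ∧ σ x ≠ τ x) ∧
      (∃ x : Fin n, (x : ℕ) / m = j ∧ σ x ≠ τ x)) :
    LocallyEncapsulating σ τ :=
  locallyEncapsulating_of_differ_on_two_blocks_general n m σ τ hσ hτ hdiff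
end

section
/- Let H(n) denote the number of permutations σ of [n] = {1,…,n} that are not locally parallel to the identity permutation. Then H(n) ≤ 6^n for every positive integer n. -/
/-!
Put `i = σ⁻¹ a`, `j = σ⁻¹ b`: a permutation `σ` is not locally parallel to the identity exactly
when every inversion `i < j`, `σ j < σ i` satisfies `i ≤ σ i` and `σ j ≤ j`. Hence `σ` is
increasing on its deficiencies `{i | σ i < i}` and on its excedances `{i | i < σ i}`, so it is
determined by these two sets of positions together with their images. All of this is recorded
by the word `i ↦ (compare (σ i) i, i < σ⁻¹ i)` over an alphabet of size `3 · 2 = 6`.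
-/

/-- Two permutations `σ` and `τ` of `[n]` are *locally parallel* if there exist
distinct elements `a, b` with `σ⁻¹(a) < σ⁻¹(b)`, `τ⁻¹(b) < τ⁻¹(a)`, and the position
intervals `[σ⁻¹(a), σ⁻¹(b)]` and `[τ⁻¹(b), τ⁻¹(a)]` disjoint. -/
def LocallyParallel {n : ℕ} (σ τ : Equiv.Perm (Fin n)) : Prop :=
  ∃ a b : Fin n, a ≠ b ∧ σ⁻¹ a < σ⁻¹ b ∧ τ⁻¹ b < τ⁻¹ a ∧
    Set.Icc (σ⁻¹ a) (σ⁻¹ b) ∩ Set.Icc (τ⁻¹ b) (τ⁻¹ a) = ∅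

open Set

theorem StrictMonoOn.eqOn_of_image_eq {α β : Type*} [LinearOrder α] [Preorder β]
    {f g : α → β} {s : Set α} (hs : s.Finite) (hf : StrictMonoOn f s) (hg : StrictMonoOn g s)
    (h : f '' s = g '' s) : EqOn f g s := by
  have := hs.to_subtype
  have hfg : s.domRestrict f = s.domRestrict g := by
    rwa [← hf.domRestrict.range_inj hg.domRestrict, range_domRestrict, range_domRestrict]
  exact fun x hx => congrFun hfg ⟨x, hx⟩

namespace Equiv.Perm

variable {α : Type*} [LinearOrder α]

def InversionsStraddleDiagonal (σ : Perm α) : Prop :=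
  ∀ i j, i < j → σ j < σ i → i ≤ σ i ∧ σ j ≤ j

def diagonalCode (σ : Perm α) (i : α) : Ordering × Bool :=
  (compare (σ i) i, decide (i < σ⁻¹ i))

theorem image_setOf_apply_lt (σ : Perm α) : σ '' {i | σ i < i} = {v | v < σ⁻¹ v} := by
  ext v
  simp [σ.image_eq_preimage_symm, ← Perm.inv_def]

theorem image_setOf_lt_apply (σ : Perm α) : σ '' {i | i < σ i} = {v | σ⁻¹ v < v} := by
  ext v
  simp [σ.image_eq_preimage_symm, ← Perm.inv_def]

variable {σ τ : Perm α}

theorem InversionsStraddleDiagonal.strictMonoOn_deficiencies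
    (hσ : σ.InversionsStraddleDiagonal) : StrictMonoOn σ {i | σ i < i} := by
  intro i hi j _ hij
  by_contra! hji
  have hji : σ j < σ i := hji.lt_of_ne (σ.injective.ne hij.ne')
  exact (hσ i j hij hji).1.not_gt hi

theorem InversionsStraddleDiagonal.strictMonoOn_excedances
    (hσ : σ.InversionsStraddleDiagonal) : StrictMonoOn σ {i | i < σ i} := by
  intro i _ j hj hij
  by_contra! hji
  have hji : σ j < σ i := hji.lt_of_ne (σ.injective.ne hij.ne')
  exact (hσ i j hij hji).2.not_gt hj

theorem eq_of_diagonalCode_eq [Finite α] (hσ : σ.InversionsStraddleDiagonal)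
    (hτ : τ.InversionsStraddleDiagonal) (h : σ.diagonalCode = τ.diagonalCode) : σ = τ := by
  have hcmp (i : α) : compare (σ i) i = compare (τ i) i := congrArg Prod.fst (congrFun h i)
  have hbit (v : α) : v < σ⁻¹ v ↔ v < τ⁻¹ v := by
    simpa [diagonalCode] using congrArg Prod.snd (congrFun h v)
  have hfix (i : α) : σ i = i ↔ τ i = i := by simp only [← compare_eq_iff_eq, hcmp]
  have hD : {i | σ i < i} = {i | τ i < i} := by
    ext i; simp only [mem_ofPred_eq, ← compare_lt_iff_lt, hcmp]
  have hE : {i | i < σ i} = {i | i < τ i} := by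
    ext i; simp only [mem_ofPred_eq, ← compare_gt_iff_gt, hcmp]
  have hS : σ '' {i | σ i < i} = τ '' {i | τ i < i} := by
    rw [image_setOf_apply_lt, image_setOf_apply_lt]
    ext v; exact hbit v
  -- `σ⁻¹ v < v` is read off the bit at `v` and whether `v` is a fixed point.
  have hT : σ '' {i | i < σ i} = τ '' {i | i < τ i} := by
    have key (ρ : Perm α) (v : α) : ρ⁻¹ v < v ↔ ¬ v < ρ⁻¹ v ∧ ¬ ρ v = v := by
      rw [lt_iff_le_and_ne, not_lt, Ne, inv_eq_iff_eq, eq_comm (a := v)]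
    rw [image_setOf_lt_apply, image_setOf_lt_apply]
    ext v; simp only [mem_ofPred_eq, key, hbit, hfix]
  ext i
  rcases lt_trichotomy (σ i) i with hi | hi | hi
  · rw [hD] at hS
    exact (hσ.strictMonoOn_deficiencies.mono hD.ge).eqOn_of_image_eq (toFinite _)
      hτ.strictMonoOn_deficiencies hS (show i ∈ {i | τ i < i} from hD ▸ hi)
  · rw [hi, (hfix i).1 hi]
  · rw [hE] at hT
    exact (hσ.strictMonoOn_excedances.mono hE.ge).eqOn_of_image_eq (toFinite _)
      hτ.strictMonoOn_excedances hT (show i ∈ {i | i < τ i} from hE ▸ hi)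

end Equiv.Perm

theorem inversionsStraddleDiagonal_of_not_locallyParallel_one {n : ℕ} {σ : Equiv.Perm (Fin n)}
    (h : ¬ LocallyParallel σ 1) : σ.InversionsStraddleDiagonal := by
  intro i j hij hji
  have hmeet : (Icc i j ∩ Icc (σ j) (σ i)).Nonempty := by
    rw [nonempty_iff_ne_empty]
    intro hempty
    exact h ⟨σ i, σ j, σ.injective.ne hij.ne, by simpa using hij, by simpa using hji,
      by simpa using hempty⟩
  obtain ⟨k, ⟨hik, hkj⟩, hjk, hki⟩ := hmeet
  exact ⟨hik.trans hki, hjk.trans hkj⟩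

theorem card_not_locallyParallel_id_le_general (n : ℕ) :
    Nat.card {σ : Equiv.Perm (Fin n) // ¬ LocallyParallel σ 1} ≤ 6 ^ n := by
  have hinj : Function.Injective
      fun σ : {σ : Equiv.Perm (Fin n) // ¬ LocallyParallel σ 1} => σ.1.diagonalCode := by
    rintro ⟨σ, hσ⟩ ⟨τ, hτ⟩ h
    exact Subtype.ext <| Equiv.Perm.eq_of_diagonalCode_eq
      (inversionsStraddleDiagonal_of_not_locallyParallel_one hσ)
      (inversionsStraddleDiagonal_of_not_locallyParallel_one hτ) h
  calc Nat.card {σ : Equiv.Perm (Fin n) // ¬ LocallyParallel σ 1}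
      ≤ Nat.card (Fin n → Ordering × Bool) := Nat.card_le_card_of_injective _ hinj
    _ = 6 ^ n := by simp [Nat.card_eq_fintype_card, show Fintype.card Ordering = 3 from rfl]

/-- The number of permutations of `[n]` not locally parallel to the identity
permutation is at most `6 ^ n`. -/
theorem card_not_locallyParallel_id_le (n : ℕ) (hn : 0 < n) :
    Nat.card {σ : Equiv.Perm (Fin n) // ¬ LocallyParallel σ 1} ≤ 6 ^ n :=
  card_not_locallyParallel_id_le_general n
end

section
/- For every positive integer n and every fixed permutation π of [n] = {1,…,n}, the number of permutations σ of [n] that are not locally parallel to π is at most 6^n. -/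
namespace Equiv.Perm

variable {α : Type*} [LinearOrder α]

/-- For every inversion `y < x`, `f x < f y`, the intervals `[y, x]` and `[f x, f y]` meet. -/
def InversionsOverlap (f : Perm α) : Prop :=
  ∀ ⦃x y : α⦄, y < x → f x < f y → f x ≤ x ∧ y ≤ f y

def excedanceCode (f : Perm α) (i : α) : Ordering × Bool :=
  (compare (f i) i, decide (f⁻¹ i < i))

namespace InversionsOverlap

variable {f g : Perm α}

theorem apply_lt_apply_of_apply_lt_self (hf : f.InversionsOverlap) {x x' : α}
    (hfx : f x < x) (hxx' : x < x') : f x < f x' := by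
  by_contra! hle
  have hlt : f x' < f x := hle.lt_of_ne fun h => hxx'.ne' (f.injective h)
  exact (hf hxx' hlt).2.not_gt hfx

theorem apply_lt_apply_of_lt_apply_self (hf : f.InversionsOverlap) {x y : α}
    (hxf : x < f x) (hyx : y < x) : f y < f x := by
  by_contra! hle
  have hlt : f x < f y := hle.lt_of_ne fun h => hyx.ne' (f.injective h)
  exact (hf hyx hlt).1.not_gt hxf

theorem apply_le_of_excedanceCode_eq (hf : f.InversionsOverlap)
    (hcode : f.excedanceCode = g.excedanceCode) {x : α} (hbelow : ∀ y < x, f y = g y) :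
    f x ≤ g x := by
  -- `z = f⁻¹ (g x)` is not below `x`; if it is above, `f x < f z` because an inversion `x < z`
  -- would not overlap: the code at `x` rules this out when `g x ≤ x`, the code at `g x` otherwise.
  set v := g x
  have hcmp : compare (f x) x = compare v x := congrArg Prod.fst (congrFun hcode x)
  have hexc : f⁻¹ v < v ↔ g⁻¹ v < v := by
    simpa [excedanceCode] using congrArg Prod.snd (congrFun hcode v)
  have hfz : f (f⁻¹ v) = v := f.apply_symm_apply v
  have hxz : x ≤ f⁻¹ v := by
    by_contra! hzx
    have : g (f⁻¹ v) = g x := (hbelow _ hzx).symm.trans hfz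
    exact hzx.ne (g.injective this)
  rcases hxz.eq_or_lt with hxz | hxz
  · rw [hxz, hfz]
  rcases lt_trichotomy v x with hvx | hvx | hvx
  · have hfx : f x < x := compare_lt_iff_lt.mp (hcmp.trans (compare_lt_iff_lt.mpr hvx))
    exact hfz ▸ (hf.apply_lt_apply_of_apply_lt_self hfx hxz).le
  · exact ((compare_eq_iff_eq.mp (hcmp.trans (compare_eq_iff_eq.mpr hvx))).trans hvx.symm).le
  · have hzv : f⁻¹ v < v := hexc.mpr (by rwa [show g⁻¹ v = x from g.symm_apply_apply x])
    exact hfz ▸ (hf.apply_lt_apply_of_lt_apply_self (hfz.symm ▸ hzv) hxz).le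

theorem eq_of_excedanceCode_eq [WellFoundedLT α] (hf : f.InversionsOverlap)
    (hg : g.InversionsOverlap) (hcode : f.excedanceCode = g.excedanceCode) : f = g :=
  Equiv.ext fun x => WellFoundedLT.induction x fun _ hbelow =>
    (hf.apply_le_of_excedanceCode_eq hcode hbelow).antisymm
      (hg.apply_le_of_excedanceCode_eq hcode.symm fun y hy => (hbelow y hy).symm)

end InversionsOverlap

end Equiv.Perm

theorem inversionsOverlap_of_not_locallyParallel {n : ℕ} {σ π : Equiv.Perm (Fin n)}
    (h : ¬ LocallyParallel σ π) : (σ⁻¹ * π).InversionsOverlap := by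
  intro x y hyx hf
  by_contra! hcon
  refine h ⟨π x, π y, fun hab => hyx.ne' (π.injective hab), hf, by simpa using hyx, ?_⟩
  rw [Set.eq_empty_iff_forall_notMem]
  rintro z ⟨⟨hz₁, hz₂⟩, hz₃, hz₄⟩
  simp only [Equiv.Perm.inv_def, Equiv.symm_apply_apply] at hz₃ hz₄
  by_cases hfx : (σ⁻¹ * π) x ≤ x
  · exact (hz₂.trans_lt ((hcon hfx).trans_le hz₃)).false
  · exact (hz₄.trans_lt ((not_le.mp hfx).trans_le hz₁)).false

theorem card_not_locallyParallel_le_general (n : ℕ) (π : Equiv.Perm (Fin n)) :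
    Nat.card {σ : Equiv.Perm (Fin n) // ¬ LocallyParallel σ π} ≤ 6 ^ n := by
  let code (σ : {σ : Equiv.Perm (Fin n) // ¬ LocallyParallel σ π}) : Fin n → Ordering × Bool :=
    (σ.1⁻¹ * π).excedanceCode
  have hcode : Function.Injective code := fun σ σ' h =>
    Subtype.ext <| inv_injective <| mul_right_cancel <|
      (inversionsOverlap_of_not_locallyParallel σ.2).eq_of_excedanceCode_eq
        (inversionsOverlap_of_not_locallyParallel σ'.2) h
  calc Nat.card {σ : Equiv.Perm (Fin n) // ¬ LocallyParallel σ π}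
      ≤ Nat.card (Fin n → Ordering × Bool) := Nat.card_le_card_of_injective code hcode
    _ = 6 ^ n := by rw [Nat.card_eq_fintype_card, Fintype.card_fun, Fintype.card_fin]; rfl

/-- For any fixed permutation `π` of `[n]`, the number of permutations of `[n]`
not locally parallel to `π` is at most `6 ^ n`. -/
theorem card_not_locallyParallel_le (n : ℕ) (hn : 0 < n) (π : Equiv.Perm (Fin n)) :
    Nat.card {σ : Equiv.Perm (Fin n) // ¬ LocallyParallel σ π} ≤ 6 ^ n :=
  card_not_locallyParallel_le_general n π
end

section
/- For every positive integer n, every set S of permutations of [n] = {1,…,n} such that any two distinct permutations in S are locally parallel satisfies 6^{⌊n/3⌋} · |S| ≤ n!. -/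
open Equiv Finset

def Equiv.Perm.fiberwise {α ι : Type*} (f : α → ι) : Subgroup (Perm α) where
  carrier := {g | f ∘ g = f}
  mul_mem' {g h} hg hh := by
    change f ∘ g ∘ h = f
    rw [← Function.comp_assoc, hg, hh]
  one_mem' := rfl
  inv_mem' {g} hg := by
    change f ∘ g.symm = f
    conv_lhs => rw [← hg]
    ext a
    simp

theorem Equiv.Perm.mem_fiberwise {α ι : Type*} {f : α → ι} {g : Perm α} :
    g ∈ Perm.fiberwise f ↔ ∀ a, f (g a) = f a :=
  funext_iff

theorem Equiv.Perm.card_fiberwise {α ι : Type*} [Fintype α] [DecidableEq α] [DecidableEq ι]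
    (f : α → ι) :
    Nat.card (Perm.fiberwise f) =
      ∏ i ∈ univ.image f, (Fintype.card {a // f a = i}).factorial := by
  rw [← DomMulAct.stabilizer_card', ← Nat.card_eq_fintype_card]
  rfl

theorem Subgroup.card_mul_card_le_of_inv_mul_mem {G : Type*} [Group G] [Finite G]
    (H : Subgroup G) (S : Finset G) (hS : ∀ a ∈ S, ∀ b ∈ S, a⁻¹ * b ∈ H → a = b) :
    Nat.card H * #S ≤ Nat.card G := by
  rw [← H.card_mul_index, H.index_eq_card, ← Set.ncard_coe_finset, ← Set.ncard_univ (G ⧸ H)]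
  gcongr
  refine Set.ncard_le_ncard_of_injOn ((↑) : G → G ⧸ H) (fun _ _ ↦ Set.mem_univ _) ?_
  intro a ha b hb hab
  exact hS a ha b hb (QuotientGroup.eq.mp hab)

theorem Fin.card_subtype_div_eq {n d k : ℕ} (hd : 0 < d) (hk : k < n / d) :
    Fintype.card {p : Fin n // (p : ℕ) / d = k} = d := by
  have hkd : (k + 1) * d ≤ n := (Nat.le_div_iff_mul_le hd).mp hk
  refine (Fintype.card_congr ?_).trans (Fintype.card_fin d)
  exact
    { toFun p := ⟨p.1 % d, Nat.mod_lt _ hd⟩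
      invFun j := ⟨⟨d * k + j, by nlinarith [j.2]⟩, by
        rw [Nat.mul_add_div hd, Nat.div_eq_of_lt j.2, add_zero]⟩
      left_inv p := by
        ext
        simp only
        conv_rhs => rw [← Nat.div_add_mod p.1 d, p.2]
      right_inv j := by
        ext
        simp [Nat.mod_eq_of_lt j.2] }

theorem factorial_pow_le_card_fiberwise_div {d : ℕ} (hd : 0 < d) (n : ℕ) :
    d.factorial ^ (n / d) ≤ Nat.card (Perm.fiberwise fun p : Fin n ↦ (p : ℕ) / d) := by
  classical
  rw [Perm.card_fiberwise]
  calc d.factorial ^ (n / d)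
      = ∏ k ∈ range (n / d), (Fintype.card {p : Fin n // (p : ℕ) / d = k}).factorial := by
        rw [prod_congr rfl fun k hk ↦ by rw [Fin.card_subtype_div_eq hd (mem_range.mp hk)],
          prod_const, card_range]
    _ ≤ _ := by
      refine prod_le_prod_of_subset_of_one_le' (fun k hk ↦ ?_) fun _ _ _ ↦ Nat.factorial_pos _
      have hkd : (k + 1) * d ≤ n := (Nat.le_div_iff_mul_le hd).mp (mem_range.mp hk)
      exact mem_image.mpr ⟨⟨d * k, by nlinarith⟩, mem_univ _, Nat.mul_div_cancel_left k hd⟩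

/-- Disjointness of the two intervals would put the four distinct positions
`σ⁻¹ a < σ⁻¹ b < τ⁻¹ b < τ⁻¹ a` (or the mirror order) into a single block of three. -/
theorem LocallyParallel.inv_mul_notMem_fiberwise_div_three {n : ℕ} {σ τ : Perm (Fin n)}
    (h : LocallyParallel σ τ) : σ⁻¹ * τ ∉ Perm.fiberwise fun p : Fin n ↦ (p : ℕ) / 3 := by
  obtain ⟨a, b, -, hab, hba, hdisj⟩ := h
  intro hmem
  have ha : (σ⁻¹ a : ℕ) / 3 = (τ⁻¹ a : ℕ) / 3 := by
    simpa using Perm.mem_fiberwise.mp hmem (τ⁻¹ a)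
  have hb : (σ⁻¹ b : ℕ) / 3 = (τ⁻¹ b : ℕ) / 3 := by
    simpa using Perm.mem_fiberwise.mp hmem (τ⁻¹ b)
  rw [Set.Icc_inter_Icc, Set.Icc_eq_empty_iff] at hdisj
  simp only [max_le_iff, le_min_iff, Fin.le_def, Fin.lt_def] at hdisj hab hba
  omega

theorem card_pairwise_locallyParallel_le_general (n : ℕ)
    (S : Finset (Equiv.Perm (Fin n)))
    (hS : ∀ σ ∈ S, ∀ τ ∈ S, σ ≠ τ → LocallyParallel σ τ) :
    6 ^ (n / 3) * S.card ≤ Nat.factorial n := by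
  set H := Perm.fiberwise fun p : Fin n ↦ (p : ℕ) / 3
  have hcosets : ∀ σ ∈ S, ∀ τ ∈ S, σ⁻¹ * τ ∈ H → σ = τ := fun σ hσ τ hτ hστ ↦
    not_imp_comm.mp (hS σ hσ τ hτ) fun h ↦ h.inv_mul_notMem_fiberwise_div_three hστ
  calc 6 ^ (n / 3) * #S ≤ Nat.card H * #S := by
        gcongr
        exact factorial_pow_le_card_fiberwise_div (d := 3) (by norm_num) n
    _ ≤ Nat.card (Perm (Fin n)) := H.card_mul_card_le_of_inv_mul_mem S hcosets
    _ = n.factorial := by rw [Nat.card_perm, Nat.card_fin]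

/-- Any set of pairwise locally parallel permutations of `[n]` has size at most
`n! / 6 ^ ⌊n/3⌋`. -/
theorem card_pairwise_locallyParallel_le (n : ℕ) (hn : 0 < n)
    (S : Finset (Equiv.Perm (Fin n)))
    (hS : ∀ σ ∈ S, ∀ τ ∈ S, σ ≠ τ → LocallyParallel σ τ) :
    6 ^ (n / 3) * S.card ≤ Nat.factorial n :=
  card_pairwise_locallyParallel_le_general n S hS
end

section
/- Let n be a positive integer and let σ and τ be permutations of [n] = {1,…,n} such that for every element x ∈ [n] the positions σ⁻¹(x) and τ⁻¹(x) lie in the same consecutive triple of positions, i.e., ⌊(σ⁻¹(x)−1)/3⌋ = ⌊(τ⁻¹(x)−1)/3⌋. Then σ and τ are not locally parallel. -/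
/-- If for every element `x` the positions of `x` in `σ` and in `τ` lie in the same
consecutive triple of positions (positions here are `0`-indexed by `Fin n`, so the
`1`-indexed condition `⌊(pos - 1)/3⌋` becomes `val / 3`), then `σ` and `τ` are not
locally parallel. -/
theorem not_locallyParallel_of_same_triple (n : ℕ) (hn : 0 < n)
    (σ τ : Equiv.Perm (Fin n))
    (h : ∀ x : Fin n, (σ⁻¹ x : ℕ) / 3 = (τ⁻¹ x : ℕ) / 3) :
    ¬ LocallyParallel σ τ := by
  rintro ⟨a, b, hab, h1, h2, hd⟩
  have hp := h a
  have hq := h b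
  have hm : max (σ⁻¹ a) (τ⁻¹ b) ∈
      Set.Icc (σ⁻¹ a) (σ⁻¹ b) ∩ Set.Icc (τ⁻¹ b) (τ⁻¹ a) := by
    simp only [Set.mem_inter_iff, Set.mem_Icc, le_max_iff, max_le_iff,
      Fin.le_def, Fin.lt_def] at *
    omega
  rw [hd] at hm
  exact hm
end
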